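/- arXiv:2203.01201 — 7 statements merged into one kernel-verified Lean document; each statement's English description precedes it below -/
import Mathlib

section
/- Let X = [0,1]^n with the componentwise partial order. Let f: X → X be order reversing (x ⪯ y implies f(y) ⪯ f(x)) and suppose there exists 0 < α ≤ 1 such that for all x ∈ X and all t ∈ [0,1], f(tx) ⪯ (1/(t + α(1-t))) · f(x). Then f has a unique fixed point in X. -/
open Set Filter Topology

noncomputable def stmt0seq (n : ℕ) (f : (Fin n → ℝ) → (Fin n → ℝ)) :
    ℕ → ((Fin n → ℝ) × (Fin n → ℝ))
  | 0 => (fun _ => 0, fun _ => 1)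
  | k+1 => (f (stmt0seq n f k).2, f (stmt0seq n f k).1)

/-- An order-reversing self-map of `[0,1]^n` satisfying the
contraction-like inequality has a unique fixed point. -/
theorem stmt0 (n : ℕ) (f : (Fin n → ℝ) → (Fin n → ℝ))
    (hmaps : ∀ x : Fin n → ℝ, (∀ i, x i ∈ Set.Icc (0:ℝ) 1) →
      ∀ i, f x i ∈ Set.Icc (0:ℝ) 1)
    (hrev : ∀ x y : Fin n → ℝ, (∀ i, x i ∈ Set.Icc (0:ℝ) 1) →
      (∀ i, y i ∈ Set.Icc (0:ℝ) 1) → (∀ i, x i ≤ y i) → ∀ i, f y i ≤ f x i)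
    (α : ℝ) (hα0 : 0 < α) (hα1 : α ≤ 1)
    (hcontr : ∀ x : Fin n → ℝ, (∀ i, x i ∈ Set.Icc (0:ℝ) 1) →
      ∀ t ∈ Set.Icc (0:ℝ) 1, ∀ i,
        f (fun j => t * x j) i ≤ (1 / (t + α * (1 - t))) * f x i) :
    ∃! y : Fin n → ℝ, (∀ i, y i ∈ Set.Icc (0:ℝ) 1) ∧ f y = y := by
  classical
  set a : ℕ → Fin n → ℝ := fun k => (stmt0seq n f k).1 with ha
  set b : ℕ → Fin n → ℝ := fun k => (stmt0seq n f k).2 with hb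
  have ha0 : a 0 = fun _ => 0 := rfl
  have hb0 : b 0 = fun _ => 1 := rfl
  have haS : ∀ k, a (k+1) = f (b k) := fun k => rfl
  have hbS : ∀ k, b (k+1) = f (a k) := fun k => rfl
  have hαlt : (0:ℝ) ≤ 1 - α := by linarith
  have hα2 : 1 - α < 1 := by linarith
  have htmem : ∀ k, (1 - (1-α)^k) ∈ Icc (0:ℝ) 1 := by
    intro k
    constructor
    · have : (1-α)^k ≤ 1 := pow_le_one₀ hαlt (by linarith)
      linarith
    · have : 0 ≤ (1-α)^k := pow_nonneg hαlt k
      linarith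
  have key : ∀ k, (∀ i, a k i ∈ Icc (0:ℝ) 1) ∧ (∀ i, b k i ∈ Icc (0:ℝ) 1) ∧
      (∀ i, a k i ≤ a (k+1) i) ∧ (∀ i, b (k+1) i ≤ b k i) ∧
      (∀ i, a k i ≤ b k i) ∧ (∀ i, (1 - (1-α)^k) * b k i ≤ a k i) := by
    intro k
    induction k with
    | zero =>
      refine ⟨fun i => ⟨le_refl _, zero_le_one⟩, fun i => ⟨zero_le_one, le_refl _⟩,
        fun i => ?_, fun i => ?_, fun i => zero_le_one, fun i => by simp [show a 0 i = (0:ℝ) from rfl]⟩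
      · exact (hmaps _ (fun j => ⟨zero_le_one, le_refl 1⟩) i).1
      · exact (hmaps _ (fun j => ⟨le_refl 0, zero_le_one⟩) i).2
    | succ k ih =>
      obtain ⟨hak, hbk, hamono, hbmono, hab, ht⟩ := ih
      have hak1 : ∀ i, a (k+1) i ∈ Icc (0:ℝ) 1 := hmaps _ hbk
      have hbk1 : ∀ i, b (k+1) i ∈ Icc (0:ℝ) 1 := hmaps _ hak
      refine ⟨hak1, hbk1, hrev _ _ hbk1 hbk hbmono, hrev _ _ hak hak1 hamono,
        hrev _ _ hak hbk hab, ?_⟩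
      intro i
      have htI := htmem k
      have htb : ∀ j, (fun j => (1 - (1-α)^k) * b k j) j ∈ Icc (0:ℝ) 1 := fun j =>
        ⟨mul_nonneg htI.1 (hbk j).1, mul_le_one₀ htI.2 (hbk j).1 (hbk j).2⟩
      have h1 : ∀ i, f (a k) i ≤ f (fun j => (1 - (1-α)^k) * b k j) i :=
        hrev _ _ htb hak ht
      have h2 := hcontr (b k) hbk (1 - (1-α)^k) htI
      have hspos : 0 < (1 - (1-α)^k) + α * (1 - (1 - (1-α)^k)) := by
        nlinarith [htI.1, htI.2]
      have h3 := (h1 i).trans (h2 i)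
      rw [one_div_mul_eq_div] at h3
      have h4 := (le_div_iff₀ hspos).mp h3
      have hs : (1 - (1-α)^k) + α * (1 - (1 - (1-α)^k)) = 1 - (1-α)^(k+1) := by
        rw [pow_succ]; ring
      rw [hs] at h4
      calc (1 - (1-α)^(k+1)) * b (k+1) i = f (a k) i * (1 - (1-α)^(k+1)) := by
            rw [hbS]; ring
        _ ≤ f (b k) i := h4
        _ = a (k+1) i := by rw [haS]
  have hamem : ∀ k i, a k i ∈ Icc (0:ℝ) 1 := fun k => (key k).1
  have hbmem : ∀ k i, b k i ∈ Icc (0:ℝ) 1 := fun k => (key k).2.1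
  have haMono : ∀ i, Monotone (fun k => a k i) := fun i =>
    monotone_nat_of_le_succ (fun k => (key k).2.2.1 i)
  have hbAnti : ∀ i, Antitone (fun k => b k i) := fun i =>
    antitone_nat_of_succ_le (fun k => (key k).2.2.2.1 i)
  have hab_all : ∀ k m i, a k i ≤ b m i := by
    intro k m i
    calc a k i ≤ a (max k m) i := haMono i (le_max_left _ _)
      _ ≤ b (max k m) i := (key _).2.2.2.2.1 i
      _ ≤ b m i := hbAnti i (le_max_right _ _)
  -- limit lemma
  have hlim : ∀ c : ℝ, Tendsto (fun k => (1 - (1-α)^k) * c) atTop (nhds c) := by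
    intro c
    have h : Tendsto (fun k => (1-α)^k) atTop (nhds 0) :=
      tendsto_pow_atTop_nhds_zero_of_lt_one hαlt hα2
    have h2 : Tendsto (fun k => (1 - (1-α)^k)) atTop (nhds (1 - 0)) :=
      tendsto_const_nhds.sub h
    simpa using h2.mul_const c
  -- the candidate fixed point
  set y : Fin n → ℝ := fun i => ⨆ k, a k i with hy
  have hbdd : ∀ i, BddAbove (Set.range fun k => a k i) := by
    intro i
    refine ⟨1, ?_⟩
    rintro _ ⟨k, rfl⟩
    exact (hamem k i).2
  have hyle : ∀ k i, a k i ≤ y i := fun k i => le_ciSup (hbdd i) k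
  have hyub : ∀ i c, (∀ k, a k i ≤ c) → y i ≤ c := fun i c h => ciSup_le h
  have hymem : ∀ i, y i ∈ Icc (0:ℝ) 1 := by
    intro i
    exact ⟨le_trans (by simp [ha0]) (hyle 0 i), hyub i 1 (fun k => (hamem k i).2)⟩
  have hyb : ∀ m i, y i ≤ b m i := fun m i => hyub i _ (fun k => hab_all k m i)
  -- y ≤ f y
  have h1 : ∀ i, y i ≤ f y i := by
    intro i
    refine hyub i _ ?_
    intro k
    cases k with
    | zero => exact le_trans (le_of_eq (by simp [ha0])) (hmaps y hymem i).1
    | succ k =>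
      rw [haS]
      exact hrev y (b k) hymem (hbmem k) (hyb k) i
  -- f y ≤ y
  have h2 : ∀ i, f y i ≤ y i := by
    intro i
    have hfyb : ∀ k, f y i ≤ b k i := by
      intro k
      cases k with
      | zero => exact (by simpa [hb0] using (hmaps y hymem i).2)
      | succ k =>
        rw [hbS]
        exact hrev (a k) y (hamem k) hymem (hyle k) i
    refine le_of_tendsto' (hlim (f y i)) ?_
    intro k
    calc (1 - (1-α)^k) * f y i ≤ (1 - (1-α)^k) * b k i :=
          mul_le_mul_of_nonneg_left (hfyb k) (htmem k).1
      _ ≤ a k i := (key k).2.2.2.2.2 i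
      _ ≤ y i := hyle k i
  have hfy : f y = y := funext (fun i => le_antisymm (h2 i) (h1 i))
  refine ⟨y, ⟨hymem, hfy⟩, ?_⟩
  rintro z ⟨hzmem, hzfix⟩
  -- any fixed point is sandwiched
  have hsand : ∀ k, (∀ i, a k i ≤ z i) ∧ (∀ i, z i ≤ b k i) := by
    intro k
    induction k with
    | zero => exact ⟨fun i => by simpa [ha0] using (hzmem i).1,
        fun i => by simpa [hb0] using (hzmem i).2⟩
    | succ k ih =>
      constructor
      · intro i
        rw [haS]
        calc f (b k) i ≤ f z i := hrev z (b k) hzmem (hbmem k) ih.2 i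
          _ = z i := by rw [hzfix]
      · intro i
        rw [hbS]
        calc z i = f z i := by rw [hzfix]
          _ ≤ f (a k) i := hrev (a k) z (hamem k) hzmem ih.1 i
  funext i
  have hz_ge : y i ≤ z i := by
    refine le_of_tendsto' (hlim (y i)) ?_
    intro k
    calc (1 - (1-α)^k) * y i ≤ (1 - (1-α)^k) * b k i :=
          mul_le_mul_of_nonneg_left (hyb k i) (htmem k).1
      _ ≤ a k i := (key k).2.2.2.2.2 i
      _ ≤ z i := (hsand k).1 i
  have hz_le : z i ≤ y i := by
    refine le_of_tendsto' (hlim (z i)) ?_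
    intro k
    calc (1 - (1-α)^k) * z i ≤ (1 - (1-α)^k) * b k i :=
          mul_le_mul_of_nonneg_left ((hsand k).2 i) (htmem k).1
      _ ≤ a k i := (key k).2.2.2.2.2 i
      _ ≤ y i := hyle k i
  exact le_antisymm hz_le hz_ge
end

section
/- Let X = [0,1]^n and f: X → X be order reversing with the contraction-like property f(tx) ⪯ (1/(t+α(1-t)))·f(x) for some 0 < α ≤ 1. Then for any starting point x⁽⁰⁾ ∈ X, the iteration sequence x⁽ᵏ⁺¹⁾ = f(x⁽ᵏ⁾) converges to the unique fixed point of f. -/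
/-- For any starting point in `[0,1]^n`, the iteration
`x⁽ᵏ⁺¹⁾ = f(x⁽ᵏ⁾)` converges to the unique fixed point of `f`. -/
theorem stmt2 (n : ℕ) (f : (Fin n → ℝ) → (Fin n → ℝ))
    (hmaps : ∀ x : Fin n → ℝ, (∀ i, x i ∈ Set.Icc (0:ℝ) 1) →
      ∀ i, f x i ∈ Set.Icc (0:ℝ) 1)
    (hrev : ∀ x y : Fin n → ℝ, (∀ i, x i ∈ Set.Icc (0:ℝ) 1) →
      (∀ i, y i ∈ Set.Icc (0:ℝ) 1) → (∀ i, x i ≤ y i) → ∀ i, f y i ≤ f x i)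
    (α : ℝ) (hα0 : 0 < α) (hα1 : α ≤ 1)
    (hcontr : ∀ x : Fin n → ℝ, (∀ i, x i ∈ Set.Icc (0:ℝ) 1) →
      ∀ t ∈ Set.Icc (0:ℝ) 1, ∀ i,
        f (fun j => t * x j) i ≤ (1 / (t + α * (1 - t))) * f x i)
    (x : ℕ → (Fin n → ℝ)) (hx0 : ∀ i, x 0 i ∈ Set.Icc (0:ℝ) 1)
    (hx : ∀ k, x (k + 1) = f (x k)) :
    ∃ y : Fin n → ℝ, (∀ i, y i ∈ Set.Icc (0:ℝ) 1) ∧ f y = y ∧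
      (∀ z : Fin n → ℝ, (∀ i, z i ∈ Set.Icc (0:ℝ) 1) → f z = z → z = y) ∧
      Filter.Tendsto x Filter.atTop (nhds y) := by
  classical
  -- notation
  set dom : (Fin n → ℝ) → Prop := fun v => ∀ i, v i ∈ Set.Icc (0:ℝ) 1 with hdom
  set g : (Fin n → ℝ) → (Fin n → ℝ) := fun v => f (f v) with hgdef
  set a : ℕ → Fin n → ℝ := fun k => g^[k] (fun _ => 0) with hadef
  set b : ℕ → Fin n → ℝ := fun k => g^[k] (fun _ => 1) with hbdef
  have ha0 : a 0 = fun _ => 0 := rfl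
  have hb0 : b 0 = fun _ => 1 := rfl
  have hasucc : ∀ k, a (k+1) = g (a k) := fun k => Function.iterate_succ_apply' g k _
  have hbsucc : ∀ k, b (k+1) = g (b k) := fun k => Function.iterate_succ_apply' g k _
  have hgdom : ∀ v, dom v → dom (g v) := fun v hv => hmaps _ (hmaps v hv)
  have hadom : ∀ k, dom (a k) := by
    intro k; induction k with
    | zero => intro i; rw [ha0]; constructor <;> norm_num
    | succ k ih => rw [hasucc]; exact hgdom _ ih
  have hbdom : ∀ k, dom (b k) := by
    intro k; induction k with
    | zero => intro i; rw [hb0]; constructor <;> norm_num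
    | succ k ih => rw [hbsucc]; exact hgdom _ ih
  -- g is order preserving on the domain
  have hgmono : ∀ u v, dom u → dom v → (∀ i, u i ≤ v i) → ∀ i, g u i ≤ g v i := by
    intro u v hu hv huv
    exact hrev (f v) (f u) (hmaps v hv) (hmaps u hu) (hrev u v hu hv huv)
  -- key contraction step
  have key : ∀ t : ℝ, t ∈ Set.Icc (0:ℝ) 1 → ∀ u v : Fin n → ℝ, dom u → dom v →
      (∀ i, t * v i ≤ u i) →
      ∀ i, (1 - (1-α)^2 * (1 - t)) * g v i ≤ g u i := by
    intro t ht u v hu hv htvu i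
    obtain ⟨ht0, ht1⟩ := ht
    set s : ℝ := t + α * (1 - t) with hsdef
    have hs0 : 0 < s := by nlinarith
    have hs1 : s ≤ 1 := by nlinarith
    have htvdom : dom (fun j => t * v j) := by
      intro j; obtain ⟨h1, h2⟩ := hv j
      refine ⟨by positivity, ?_⟩
      show t * v j ≤ 1
      nlinarith
    -- step 1 : s * f u ≤ f v
    have step1 : ∀ j, s * f u j ≤ f v j := by
      intro j
      have h1 : f u j ≤ f (fun j => t * v j) j :=
        hrev (fun j => t * v j) u htvdom hu htvu j
      have h2 : f (fun j => t * v j) j ≤ (1 / s) * f v j :=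
        hcontr v hv t ⟨ht0, ht1⟩ j
      have := h1.trans h2
      rw [div_mul_eq_mul_div, one_mul, le_div_iff₀ hs0] at this
      linarith [this]
    -- step 2
    have hsfudom : dom (fun j => s * f u j) := by
      intro j; obtain ⟨h1, h2⟩ := hmaps u hu j
      refine ⟨by positivity, ?_⟩
      show s * f u j ≤ 1
      nlinarith
    have h3 : g v i ≤ f (fun j => s * f u j) i :=
      hrev (fun j => s * f u j) (f v) hsfudom (hmaps v hv) step1 i
    have h4 : f (fun j => s * f u j) i ≤ (1 / (s + α * (1 - s))) * f (f u) i :=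
      hcontr (f u) (hmaps u hu) s ⟨hs0.le, hs1⟩ i
    have hs'0 : 0 < s + α * (1 - s) := by nlinarith
    have h5 := h3.trans h4
    rw [div_mul_eq_mul_div, one_mul, le_div_iff₀ hs'0] at h5
    have heq : s + α * (1 - s) = 1 - (1-α)^2 * (1 - t) := by rw [hsdef]; ring
    rw [heq] at h5
    linarith [h5]
  -- the coefficient sequence
  have hq01 : ∀ k : ℕ, (1-α)^(2*k) ∈ Set.Icc (0:ℝ) 1 := by
    intro k
    constructor
    · exact pow_nonneg (by linarith) _
    · exact pow_le_one₀ (by linarith) (by linarith)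
  -- main contraction estimate:  (1 - (1-α)^(2k)) * b k ≤ a k
  have hab : ∀ k, ∀ i, (1 - (1-α)^(2*k)) * b k i ≤ a k i := by
    intro k; induction k with
    | zero =>
      intro i
      simp [ha0, hb0]
    | succ k ih =>
      intro i
      have h := key (1 - (1-α)^(2*k)) ⟨by linarith [(hq01 k).2], by linarith [(hq01 k).1]⟩
        (a k) (b k) (hadom k) (hbdom k) ih i
      rw [hasucc, hbsucc]
      have heq : 1 - (1-α)^2 * (1 - (1 - (1-α)^(2*k))) = 1 - (1-α)^(2*(k+1)) := by ring
      rw [heq] at h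
      exact h
  -- a increasing, b decreasing, a ≤ b
  have haleb : ∀ k i, a k i ≤ b k i := by
    intro k; induction k with
    | zero => intro i; simp [ha0, hb0]
    | succ k ih =>
      rw [hasucc, hbsucc]
      exact hgmono _ _ (hadom k) (hbdom k) ih
  have hamono : ∀ k i, a k i ≤ a (k+1) i := by
    intro k; induction k with
    | zero =>
      intro i
      have := (hadom 1 i).1
      simpa [ha0] using this
    | succ k ih =>
      intro i
      calc a (k+1+1) i = g (a (k+1)) i := congrFun (hasucc (k+1)) i
        _ ≥ g (a k) i := hgmono _ _ (hadom k) (hadom (k+1)) ih i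
        _ = a (k+1) i := (congrFun (hasucc k) i).symm
  have hbmono : ∀ k i, b (k+1) i ≤ b k i := by
    intro k; induction k with
    | zero =>
      intro i
      have := (hbdom 1 i).2
      simpa [hb0] using this
    | succ k ih =>
      intro i
      calc b (k+1+1) i = g (b (k+1)) i := congrFun (hbsucc (k+1)) i
        _ ≤ g (b k) i := hgmono _ _ (hbdom (k+1)) (hbdom k) ih i
        _ = b (k+1) i := (congrFun (hbsucc k) i).symm
  have haMono : ∀ i, Monotone fun k => a k i := by
    intro i; exact monotone_nat_of_le_succ (fun k => hamono k i)
  have hbAnti : ∀ i, Antitone fun k => b k i := by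
    intro i; exact antitone_nat_of_succ_le (fun k => hbmono k i)
  -- sandwich relations: a k ≤ f (b k) and f (a k) ≤ b k
  have hAB : ∀ k, (∀ i, a k i ≤ f (b k) i) ∧ (∀ i, f (a k) i ≤ b k i) := by
    intro k; induction k with
    | zero =>
      constructor
      · intro i; have := (hmaps (b 0) (hbdom 0) i).1; simpa [ha0] using this
      · intro i; have := (hmaps (a 0) (hadom 0) i).2; simpa [hb0] using this
    | succ k ih =>
      obtain ⟨h1, h2⟩ := ih
      have hb1 : ∀ i, b (k+1) i ≤ f (a k) i := by
        intro i
        have h := hrev (a k) (f (b k)) (hadom k) (hmaps _ (hbdom k)) h1 i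
        calc b (k+1) i = g (b k) i := congrFun (hbsucc k) i
          _ ≤ f (a k) i := h
      have ha2 : ∀ i, f (b k) i ≤ a (k+1) i := by
        intro i
        have h := hrev (f (a k)) (b k) (hmaps _ (hadom k)) (hbdom k) h2 i
        calc f (b k) i ≤ g (a k) i := h
          _ = a (k+1) i := (congrFun (hasucc k) i).symm
      constructor
      · intro i
        have h := hrev (b (k+1)) (f (a k)) (hbdom (k+1)) (hmaps _ (hadom k)) hb1 i
        calc a (k+1) i = g (a k) i := congrFun (hasucc k) i
          _ ≤ f (b (k+1)) i := h
      · intro i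
        have h := hrev (f (b k)) (a (k+1)) (hmaps _ (hbdom k)) (hadom (k+1)) ha2 i
        calc f (a (k+1)) i ≤ g (b k) i := h
          _ = b (k+1) i := (congrFun (hbsucc k) i).symm
  -- gap bound
  have hgap : ∀ k i, b k i - a k i ≤ (1-α)^(2*k) := by
    intro k i
    have h1 := hab k i
    have h2 := (hbdom k i).2
    have h3 := (hq01 k).1
    nlinarith
  -- the limit y
  have hbdd : ∀ i, BddAbove (Set.range fun k => a k i) := by
    intro i
    exact ⟨1, by rintro r ⟨k, rfl⟩; exact (hadom k i).2⟩
  set y : Fin n → ℝ := fun i => ⨆ k, a k i with hydef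
  have haley : ∀ k i, a k i ≤ y i := by
    intro k i; exact le_ciSup (hbdd i) k
  have hyleb : ∀ k i, y i ≤ b k i := by
    intro k i
    apply ciSup_le
    intro m
    rcases le_total m k with h | h
    · exact (haMono i h).trans (haleb k i)
    · exact (haleb m i).trans (hbAnti i h)
  have hydom : dom y := by
    intro i
    constructor
    · exact le_trans (hadom 0 i).1 (haley 0 i)
    · exact le_trans (hyleb 0 i) (hbdom 0 i).2
  -- convergence of the gap coefficient
  have hqto : Filter.Tendsto (fun k : ℕ => (1-α)^(2*k)) Filter.atTop (nhds 0) := by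
    have : ∀ k : ℕ, (1-α)^(2*k) = (((1-α)^2 : ℝ))^k := by
      intro k; rw [← pow_mul]
    simp only [this]
    apply tendsto_pow_atTop_nhds_zero_of_lt_one
    · positivity
    · nlinarith
  -- generic squeeze: anything between a k and b k for all k equals y
  have hsqueeze : ∀ w : Fin n → ℝ, (∀ k i, a k i ≤ w i ∧ w i ≤ b k i) → w = y := by
    intro w hw
    funext i
    have hb : ∀ k, |w i - y i| ≤ (1-α)^(2*k) := by
      intro k
      have h1 := (hw k i).1
      have h2 := (hw k i).2
      have h3 := haley k i
      have h4 := hyleb k i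
      have h5 := hgap k i
      rw [abs_sub_le_iff]
      constructor <;> linarith
    have : |w i - y i| ≤ 0 := ge_of_tendsto' hqto hb
    have := abs_nonpos_iff.mp this
    linarith [sub_eq_zero.mp this]
  -- y is a fixed point
  have hfy : f y = y := by
    apply hsqueeze
    intro k i
    obtain ⟨h1, h2⟩ := hAB k
    constructor
    · exact (h1 i).trans (hrev y (b k) hydom (hbdom k) (fun j => hyleb k j) i)
    · exact (hrev (a k) y (hadom k) hydom (fun j => haley k j) i).trans (h2 i)
  -- uniqueness
  have huniq : ∀ z : Fin n → ℝ, dom z → f z = z → z = y := by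
    intro z hz hfz
    apply hsqueeze
    intro k
    induction k with
    | zero =>
      intro i
      constructor
      · have := (hz i).1; simpa [ha0] using this
      · have := (hz i).2; simpa [hb0] using this
    | succ k ih =>
      intro i
      have hzg : g z = z := by rw [hgdef]; simp [hfz]
      rw [hasucc, hbsucc, ← hzg]
      exact ⟨hgmono _ _ (hadom k) hz (fun j => (ih j).1) i,
        hgmono _ _ hz (hbdom k) (fun j => (ih j).2) i⟩
  -- the iterates stay sandwiched
  have hxdom : ∀ m, dom (x m) := by
    intro m; induction m with
    | zero => exact hx0
    | succ m ih => rw [hx m]; exact hmaps _ ih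
  have hx2 : ∀ k, (∀ i, a k i ≤ x (2*k) i) ∧ (∀ i, x (2*k) i ≤ b k i) := by
    intro k; induction k with
    | zero =>
      constructor
      · intro i; have := (hx0 i).1; simpa [ha0] using this
      · intro i; have := (hx0 i).2; simpa [hb0] using this
    | succ k ih =>
      obtain ⟨h1, h2⟩ := ih
      have hxe : x (2*(k+1)) = g (x (2*k)) := by
        have e1 : 2*(k+1) = (2*k+1)+1 := by ring
        rw [e1, hx (2*k+1), hx (2*k)]
      constructor
      · rw [hasucc, hxe]
        exact hgmono _ _ (hadom k) (hxdom (2*k)) h1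
      · rw [hbsucc, hxe]
        exact hgmono _ _ (hxdom (2*k)) (hbdom k) h2
  have hsand : ∀ k m, 2*k ≤ m → ∀ i, a k i ≤ x m i ∧ x m i ≤ b k i := by
    intro k m hm
    induction m, hm using Nat.le_induction with
    | base => exact fun i => ⟨(hx2 k).1 i, (hx2 k).2 i⟩
    | succ m hm ih =>
      intro i
      rw [hx m]
      obtain ⟨hA, hB⟩ := hAB k
      constructor
      · exact (hA i).trans (hrev (x m) (b k) (hxdom m) (hbdom k) (fun j => (ih j).2) i)
      · exact (hrev (a k) (x m) (hadom k) (hxdom m) (fun j => (ih j).1) i).trans (hB i)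
  -- convergence of x to y
  have hconv : Filter.Tendsto x Filter.atTop (nhds y) := by
    rw [tendsto_pi_nhds]
    intro i
    rw [Metric.tendsto_atTop]
    intro ε hε
    obtain ⟨k, hk⟩ := (Metric.tendsto_atTop.mp hqto ε hε) |>.imp (fun k h => h k le_rfl)
    have hqk : (1-α)^(2*k) < ε := by
      have := hk
      rw [Real.dist_eq, sub_zero, abs_of_nonneg (pow_nonneg (by linarith) _)] at this
      exact this
    refine ⟨2*k, fun m hm => ?_⟩
    obtain ⟨h1, h2⟩ := hsand k m hm i
    have h3 := haley k i
    have h4 := hyleb k i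
    have h5 := hgap k i
    rw [Real.dist_eq]
    have : |x m i - y i| ≤ (1-α)^(2*k) := by
      rw [abs_sub_le_iff]; constructor <;> linarith
    linarith
  exact ⟨y, hydom, hfy, huniq, hconv⟩
end

section
/- Let φ_i: [0,1]^n → [0,∞) be an argumentation kernel (continuous, monotone, homogeneous for scalars in [0,1]). Then for every w ∈ [0,1]^n, the map Φ_w: [0,1]^n → [0,1]^n defined by Φ_w(x)_i = w_i/(1+φ_i(x)) has a unique fixed point. -/
/-- The unit box `[0,1]^n` as a subset of `Fin n → ℝ`. -/
def unitBox (n : ℕ) : Set (Fin n → ℝ) := Set.pi Set.univ fun _ => Set.Icc (0:ℝ) 1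

/-- An argumentation kernel function: continuous, nonnegative, monotone
(w.r.t. the componentwise order) and homogeneous (for scalars in `[0,1]`)
function on `[0,1]^n`. -/
def IsKernelFun (n : ℕ) (φ : (Fin n → ℝ) → ℝ) : Prop :=
  ContinuousOn φ (unitBox n) ∧
  (∀ x ∈ unitBox n, 0 ≤ φ x) ∧
  (∀ x ∈ unitBox n, ∀ y ∈ unitBox n, (∀ i, x i ≤ y i) → φ x ≤ φ y) ∧
  (∀ x ∈ unitBox n, ∀ t ∈ Set.Icc (0:ℝ) 1, φ (fun j => t * x j) = t * φ x)

lemma mem_unitBox {n : ℕ} {x : Fin n → ℝ} :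
    x ∈ unitBox n ↔ ∀ i, 0 ≤ x i ∧ x i ≤ 1 := by
  constructor
  · intro h i; exact h i (Set.mem_univ i)
  · intro h i _; exact h i

/-- Key crossing lemma: if `u ≤ v` and `Φ_w v = u`, `Φ_w u = v`, then `u = v`. -/
lemma crossing {n : ℕ} (φ : Fin n → (Fin n → ℝ) → ℝ)
    (hφ : ∀ i, IsKernelFun n (φ i)) (w : Fin n → ℝ)
    (u v : Fin n → ℝ) (hu : u ∈ unitBox n) (hv : v ∈ unitBox n)
    (huv : ∀ i, u i ≤ v i)
    (h1 : ∀ i, u i = w i / (1 + φ i v))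
    (h2 : ∀ i, v i = w i / (1 + φ i u)) : u = v := by
  by_contra hne
  have hub : ∀ i, 0 ≤ u i ∧ u i ≤ 1 := mem_unitBox.1 hu
  have hvb : ∀ i, 0 ≤ v i ∧ v i ≤ 1 := mem_unitBox.1 hv
  have hx : ∃ i, u i < v i := by
    by_contra h
    push_neg at h
    exact hne (funext fun i => le_antisymm (huv i) (h i))
  obtain ⟨i₁, hi₁⟩ := hx
  set S : Finset (Fin n) := Finset.univ.filter (fun i => 0 < v i) with hS
  have hi₁S : i₁ ∈ S := by
    simp only [hS, Finset.mem_filter, Finset.mem_univ, true_and]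
    exact lt_of_le_of_lt (hub i₁).1 hi₁
  obtain ⟨i₀, hi₀S, hmin⟩ := S.exists_min_image (fun i => u i / v i) ⟨i₁, hi₁S⟩
  have hv₀ : 0 < v i₀ := by
    simpa only [hS, Finset.mem_filter, Finset.mem_univ, true_and] using hi₀S
  set t := u i₀ / v i₀ with ht
  have ht0 : 0 ≤ t := div_nonneg (hub i₀).1 hv₀.le
  have hv₁ : 0 < v i₁ := lt_of_le_of_lt (hub i₁).1 hi₁
  have ht1 : t < 1 := lt_of_le_of_lt (hmin i₁ hi₁S) ((div_lt_one hv₁).2 hi₁)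
  have htv : ∀ j, t * v j ≤ u j := by
    intro j
    rcases lt_or_eq_of_le (hvb j).1 with h | h
    · have hj : j ∈ S := by
        simp only [hS, Finset.mem_filter, Finset.mem_univ, true_and]; exact h
      exact (le_div_iff₀ h).1 (hmin j hj)
    · rw [← h, mul_zero]; exact (hub j).1
  obtain ⟨-, hnn, hmono, hhom⟩ := hφ i₀
  have htvbox : (fun j => t * v j) ∈ unitBox n := by
    rw [mem_unitBox]
    intro j
    constructor
    · exact mul_nonneg ht0 (hvb j).1
    · calc t * v j ≤ 1 * 1 := by
            apply mul_le_mul ht1.le (hvb j).2 (hvb j).1 zero_le_one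
        _ = 1 := one_mul 1
  have hmonoφ : t * φ i₀ v ≤ φ i₀ u := by
    have h := hmono (fun j => t * v j) htvbox u hu htv
    rwa [hhom v hv t ⟨ht0, ht1.le⟩] at h
  have hpu : 0 ≤ φ i₀ u := hnn u hu
  have hpv : 0 ≤ φ i₀ v := hnn v hv
  have hwpos : 0 < w i₀ := by
    by_contra h
    push_neg at h
    have : v i₀ ≤ 0 := by
      rw [h2 i₀]
      exact div_nonpos_iff.2 (Or.inr ⟨h, by linarith⟩)
    linarith
  have hkey : t * (1 + φ i₀ v) = 1 + φ i₀ u := by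
    rw [ht, h1 i₀, h2 i₀]
    field_simp
  nlinarith [hmonoφ, hkey, ht1, hpv]

/-- For an argumentation kernel `φ` and any `w ∈ [0,1]^n`, the
map `Φ_w(x)_i = w_i/(1+φ_i x)` has a unique fixed point in `[0,1]^n`. -/
theorem stmt5 (n : ℕ) (φ : Fin n → (Fin n → ℝ) → ℝ)
    (hφ : ∀ i, IsKernelFun n (φ i)) (w : Fin n → ℝ) (hw : w ∈ unitBox n) :
    ∃! x : Fin n → ℝ, x ∈ unitBox n ∧ ∀ i, x i = w i / (1 + φ i x) := by
  haveI : Fact ((0:ℝ) ≤ 1) := ⟨zero_le_one⟩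
  have hwb : ∀ i, 0 ≤ w i ∧ w i ≤ 1 := mem_unitBox.1 hw
  set B : (Fin n → Set.Icc (0:ℝ) 1) → (Fin n → ℝ) :=
    fun x => (fun i => (x i : ℝ)) with hBdef
  have hB : ∀ x, B x ∈ unitBox n := by
    intro x
    rw [mem_unitBox]
    exact fun i => ⟨(x i).2.1, (x i).2.2⟩
  have hpos : ∀ (i : Fin n) (x : Fin n → ℝ), x ∈ unitBox n → 0 < 1 + φ i x := by
    intro i x hx
    have := (hφ i).2.1 x hx
    linarith
  have hmem : ∀ (i : Fin n) (x : Fin n → ℝ), x ∈ unitBox n →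
      w i / (1 + φ i x) ∈ Set.Icc (0:ℝ) 1 := by
    intro i x hx
    have h1 := hpos i x hx
    have := (hφ i).2.1 x hx
    constructor
    · exact div_nonneg (hwb i).1 h1.le
    · rw [div_le_one h1]
      linarith [(hwb i).2]
  set Ψ : (Fin n → Set.Icc (0:ℝ) 1) → (Fin n → Set.Icc (0:ℝ) 1) :=
    fun x i => ⟨w i / (1 + φ i (B x)), hmem i (B x) (hB x)⟩ with hΨdef
  have hanti : ∀ x y, x ≤ y → Ψ y ≤ Ψ x := by
    intro x y hxy i
    show w i / (1 + φ i (B y)) ≤ w i / (1 + φ i (B x))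
    have hφle : φ i (B x) ≤ φ i (B y) :=
      (hφ i).2.2.1 (B x) (hB x) (B y) (hB y) (fun j => hxy j)
    apply div_le_div_of_nonneg_left (hwb i).1 (hpos i (B x) (hB x))
    · linarith
  set F : (Fin n → Set.Icc (0:ℝ) 1) →o (Fin n → Set.Icc (0:ℝ) 1) :=
    ⟨Ψ ∘ Ψ, fun x y h => hanti _ _ (hanti _ _ h)⟩ with hFdef
  set a := F.lfp with ha
  set g := F.gfp with hg
  have hFa : Ψ (Ψ a) = a := F.map_lfp
  have hFg : Ψ (Ψ g) = g := F.map_gfp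
  -- Ψ a is a fixed point of F
  have hΨa_fix : F (Ψ a) = Ψ a := by
    show Ψ (Ψ (Ψ a)) = Ψ a
    rw [hFa]
  have hΨg_fix : F (Ψ g) = Ψ g := by
    show Ψ (Ψ (Ψ g)) = Ψ g
    rw [hFg]
  have hΨa_le_g : Ψ a ≤ g := F.le_gfp hΨa_fix.ge
  have ha_le_Ψg : a ≤ Ψ g := F.lfp_le hΨg_fix.le
  have hΨg_le_a : Ψ g ≤ a := by
    have := hanti (Ψ a) g hΨa_le_g
    rwa [hFa] at this
  have hΨg_eq : Ψ g = a := le_antisymm hΨg_le_a ha_le_Ψg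
  have hΨa_eq : Ψ a = g := by
    rw [← hΨg_eq, hFg]
  have hag : a ≤ g := F.lfp_le hFg.le
  -- apply crossing lemma
  have haeqg : B a = B g := by
    apply crossing φ hφ w (B a) (B g) (hB a) (hB g) (fun i => hag i)
    · intro i
      have : (Ψ g i : ℝ) = (a i : ℝ) := by rw [hΨg_eq]
      exact this.symm
    · intro i
      have : (Ψ a i : ℝ) = (g i : ℝ) := by rw [hΨa_eq]
      exact this.symm
  have hag' : a = g := funext fun i => Subtype.ext (congrFun haeqg i)
  refine ⟨B a, ⟨hB a, ?_⟩, ?_⟩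
  · intro i
    have : (Ψ a i : ℝ) = (a i : ℝ) := by rw [hΨa_eq, ← hag']
    exact this.symm
  · rintro y ⟨hy, hyfix⟩
    have hyb := mem_unitBox.1 hy
    set y' : Fin n → Set.Icc (0:ℝ) 1 := fun i => ⟨y i, (hyb i).1, (hyb i).2⟩ with hy'
    have hBy : B y' = y := rfl
    have hΨy' : Ψ y' = y' := by
      funext i
      apply Subtype.ext
      show w i / (1 + φ i (B y')) = y i
      rw [hBy, (hyfix i)]
    have hFy' : F y' = y' := by
      show Ψ (Ψ y') = y'
      rw [hΨy', hΨy']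
    have h1 : a ≤ y' := F.lfp_le hFy'.le
    have h2 : y' ≤ g := F.le_gfp hFy'.ge
    rw [← hag'] at h2
    have : y' = a := le_antisymm h2 h1
    rw [← hBy, this]
end

section
/- Let A be an n × n real matrix with 0 ≤ a_{ij} ≤ 1, let x ∈ ℝ^n with 0 ≤ x_i ≤ 1, and let δ_1,…,δ_n > 0. Define M by m_{ii} = δ_i + Σ_k a_{ik}x_k and m_{ij} = a_{ij}x_i for i ≠ j. Then det(M) > 0. -/
/-- With `0 ≤ a_{ij} ≤ 1`, `x ∈ [0,1]^n`, `δ_i > 0`, the matrix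
`M` with `m_{ii} = δ_i + Σ_k a_{ik} x_k` and `m_{ij} = a_{ij} x_i` (`i ≠ j`)
has positive determinant. -/
theorem stmt16 (n : ℕ) (A : Matrix (Fin n) (Fin n) ℝ)
    (hA : ∀ i j, A i j ∈ Set.Icc (0:ℝ) 1) (x : Fin n → ℝ)
    (hx : ∀ i, x i ∈ Set.Icc (0:ℝ) 1) (δ : Fin n → ℝ) (hδ : ∀ i, 0 < δ i) :
    0 < (Matrix.of fun i j =>
        if i = j then δ i + ∑ k, A i k * x k else A i j * x i).det := by
  have hx0 : ∀ i, 0 ≤ x i := fun i => (hx i).1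
  have hA0 : ∀ i j, 0 ≤ A i j := fun i j => (hA i j).1
  set d : Fin n → ℝ := fun i => δ i + ∑ k, A i k * x k with hd
  have hentry : ∀ i k, (0:ℝ) ≤ A i k * x k := fun i k => mul_nonneg (hA0 i k) (hx0 k)
  have hdpos : ∀ i, 0 < d i := by
    intro i
    exact add_pos_of_pos_of_nonneg (hδ i)
      (Finset.sum_nonneg fun k _ => hentry i k)
  have hdom : ∀ i, ∑ j ∈ Finset.univ.erase i, (A i j * x j) < d i := by
    intro i
    calc ∑ j ∈ Finset.univ.erase i, A i j * x j
        ≤ ∑ j, A i j * x j := Finset.sum_le_sum_of_subset_of_nonneg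
          (Finset.erase_subset _ _) (fun k _ _ => hentry i k)
      _ < d i := lt_add_of_pos_left _ (hδ i)
  -- the "transposed x" matrix family
  set g : ℝ → Matrix (Fin n) (Fin n) ℝ := fun t =>
    Matrix.of fun i j => if i = j then d i else t * (A i j * x j) with hg
  have hcont : Continuous fun t : ℝ => (g t).det := by
    apply Continuous.matrix_det
    apply continuous_matrix
    intro i j
    by_cases h : i = j <;> simp [hg, h] <;> fun_prop
  have hf0 : (0:ℝ) < (g 0).det := by
    have : g 0 = Matrix.diagonal d := by
      ext i j
      by_cases h : i = j <;> simp [hg, Matrix.diagonal, h]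
    rw [this, Matrix.det_diagonal]
    exact Finset.prod_pos fun i _ => hdpos i
  have hne : ∀ t ∈ Set.Icc (0:ℝ) 1, (g t).det ≠ 0 := by
    intro t ht
    apply det_ne_zero_of_sum_row_lt_diag
    intro k
    have h1 : ∑ j ∈ Finset.univ.erase k, ‖g t k j‖
        = t * ∑ j ∈ Finset.univ.erase k, (A k j * x j) := by
      rw [Finset.mul_sum]
      refine Finset.sum_congr rfl fun j hj => ?_
      have hjk : k ≠ j := fun h => (Finset.mem_erase.mp hj).1 h.symm
      rw [hg]
      simp only [Matrix.of_apply, if_neg hjk]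
      rw [Real.norm_eq_abs, abs_of_nonneg (mul_nonneg ht.1 (hentry k j))]
    have h2 : ‖g t k k‖ = d k := by
      simp [hg, abs_of_nonneg (hdpos k).le]
    rw [h1, h2]
    calc t * ∑ j ∈ Finset.univ.erase k, (A k j * x j)
        ≤ 1 * ∑ j ∈ Finset.univ.erase k, (A k j * x j) :=
          mul_le_mul_of_nonneg_right ht.2 (Finset.sum_nonneg fun j _ => hentry k j)
      _ = ∑ j ∈ Finset.univ.erase k, (A k j * x j) := one_mul _
      _ < d k := hdom k
  have hf1 : (0:ℝ) < (g 1).det := by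
    by_contra hneg
    push_neg at hneg
    have hlt : (g 1).det < 0 := lt_of_le_of_ne hneg (hne 1 ⟨zero_le_one, le_refl 1⟩)
    have hsub := intermediate_value_Icc' (zero_le_one (α := ℝ)) hcont.continuousOn
    have : (0:ℝ) ∈ Set.Icc ((g 1).det) ((g 0).det) := ⟨hlt.le, hf0.le⟩
    obtain ⟨t, ht, htz⟩ := hsub this
    exact hne t ht htz
  -- determinant equality via permutation expansion
  have key : (Matrix.of fun i j =>
      if i = j then δ i + ∑ k, A i k * x k else A i j * x i).det = (g 1).det := by
    rw [Matrix.det_apply, Matrix.det_apply]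
    refine Finset.sum_congr rfl fun σ _ => ?_
    congr 1
    have hL : ∀ i : Fin n, (Matrix.of fun i j =>
        if i = j then δ i + ∑ k, A i k * x k else A i j * x i) (σ i) i
        = (if σ i = i then d (σ i) else A (σ i) i) * (if σ i = i then 1 else x (σ i)) := by
      intro i
      by_cases h : σ i = i <;> simp [h, hd]
    have hR : ∀ i : Fin n, g 1 (σ i) i
        = (if σ i = i then d (σ i) else A (σ i) i) * (if σ i = i then 1 else x i) := by
      intro i
      by_cases h : σ i = i <;> simp [hg, h]
    rw [Finset.prod_congr rfl fun i _ => hL i, Finset.prod_congr rfl fun i _ => hR i,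
      Finset.prod_mul_distrib, Finset.prod_mul_distrib]
    congr 1
    have hcomp := Equiv.prod_comp σ (fun j => if σ j = j then 1 else x j)
    rw [← hcomp]
    refine Finset.prod_congr rfl fun i _ => ?_
    have hiff : σ (σ i) = σ i ↔ σ i = i := ⟨fun h => σ.injective h, fun h => by rw [h, h]⟩
    exact if_congr hiff.symm rfl rfl
  rw [key]
  exact hf1
end

section
/- Let A be an n × n real matrix with 0 ≤ a_{ij} ≤ 1, x ∈ [0,1]^n, δ_i > 0, and M the matrix with m_{ii} = δ_i + Σ_k a_{ik}x_k and m_{ij} = a_{ij}x_i for i ≠ j. Then M is invertible and all diagonal entries of M^{-1} are strictly positive. -/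
/-!
Write `M = diag d + diag x * B`, where `B` is the off-diagonal part of `A` and
`dᵢ = δᵢ + ∑ₖ aᵢₖ xₖ`. As diagonal matrices commute, the Weinstein–Aronszajn identity
`det (1 + X Y) = det (1 + Y X)` gives `det M = det (diag d + B * diag x)`, and this matrix is
strictly diagonally dominant by rows with positive diagonal, because `∑ⱼ |bᵢⱼ| xⱼ < dᵢ`.
Scaling its off-diagonal part by `t ∈ [0, 1]` keeps it dominant, hence nonsingular
(Levy–Desplanques), so by the intermediate value theorem its determinant has the sign of
`∏ dᵢ > 0`. Principal minors of `M` have the same shape, so Cramer's rule gives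
`(M⁻¹)ᵢᵢ = det M[i,i] / det M > 0`.
-/

open Finset

namespace Matrix

variable {n : Type*} [Fintype n] [DecidableEq n]

theorem det_pos_of_sum_row_lt_diag (N : Matrix n n ℝ)
    (h : ∀ k, ∑ j ∈ univ.erase k, |N k j| < N k k) : 0 < N.det := by
  set f : ℝ → ℝ := fun t => (of fun i j => if i = j then N i j else t * N i j).det
  have hf : Continuous f := by
    refine Continuous.matrix_det (continuous_matrix fun i j => ?_)
    simp only [of_apply]
    split_ifs <;> fun_prop
  have hf_ne : ∀ t ∈ Set.Icc (0 : ℝ) 1, f t ≠ 0 := by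
    rintro t ⟨ht₀, ht₁⟩
    refine det_ne_zero_of_sum_row_lt_diag fun k => ?_
    simp only [of_apply, Real.norm_eq_abs]
    calc ∑ j ∈ univ.erase k, |if k = j then N k j else t * N k j|
        ≤ ∑ j ∈ univ.erase k, |N k j| := by
          refine sum_le_sum fun j hj => ?_
          rw [if_neg (ne_of_mem_erase hj).symm, abs_mul, abs_of_nonneg ht₀]
          exact mul_le_of_le_one_left (abs_nonneg _) ht₁
      _ < N k k := h k
      _ ≤ |N k k| := le_abs_self _
  have hf₀ : 0 < f 0 := by
    have : (of fun i j => if i = j then N i j else 0 * N i j) = diagonal fun i => N i i := by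
      ext i j
      by_cases hij : i = j <;> simp [hij]
    simp only [f, this, det_diagonal]
    exact prod_pos fun k _ => (sum_nonneg fun j _ => abs_nonneg _).trans_lt (h k)
  have hf₁ : f 1 = N.det := by
    have : (of fun i j => if i = j then N i j else 1 * N i j) = N := by
      ext i j
      by_cases hij : i = j <;> simp [hij]
    simp only [f, this]
  rw [← hf₁]
  by_contra! hneg
  obtain ⟨t, ht, hft⟩ :=
    intermediate_value_Icc' zero_le_one hf.continuousOn ⟨hneg, hf₀.le⟩
  exact hf_ne t ht hft

theorem det_diagonal_add_diagonal_mul_comm {K : Type*} [Field K] (d x : n → K)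
    (B : Matrix n n K) (hd : ∀ i, d i ≠ 0) :
    (diagonal d + diagonal x * B).det = (diagonal d + B * diagonal x).det := by
  have hl : diagonal d + diagonal x * B = diagonal d * (1 + diagonal (d⁻¹ * x) * B) := by
    rw [mul_add, mul_one, ← Matrix.mul_assoc, diagonal_mul_diagonal]
    congr 3
    funext i
    simp [hd i]
  have hr : diagonal d + B * diagonal x = (1 + B * diagonal (d⁻¹ * x)) * diagonal d := by
    rw [add_mul, Matrix.one_mul, Matrix.mul_assoc, diagonal_mul_diagonal]
    congr 3
    funext i
    simp [hd i, mul_right_comm]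
  rw [hl, hr, det_mul, det_mul, det_one_add_mul_comm, mul_comm]

theorem det_diagonal_add_diagonal_mul_pos (d x : n → ℝ) (B : Matrix n n ℝ)
    (hx : ∀ i, 0 ≤ x i) (h : ∀ i, ∑ j, |B i j| * x j < d i) :
    0 < (diagonal d + diagonal x * B).det := by
  have hd : ∀ i, 0 < d i := fun i =>
    (sum_nonneg fun j _ => mul_nonneg (abs_nonneg _) (hx j)).trans_lt (h i)
  rw [det_diagonal_add_diagonal_mul_comm d x B fun i => (hd i).ne']
  refine det_pos_of_sum_row_lt_diag _ fun k => ?_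
  have hoff : ∀ j ∈ univ.erase k, |(diagonal d + B * diagonal x) k j| = |B k j| * x j :=
    fun j hj => by
      rw [add_apply, diagonal_apply_ne _ (ne_of_mem_erase hj).symm, zero_add, mul_diagonal,
        abs_mul, abs_of_nonneg (hx j)]
  rw [sum_congr rfl hoff, add_apply, diagonal_apply_eq, mul_diagonal]
  have := h k
  rw [← add_sum_erase _ _ (mem_univ k)] at this
  nlinarith [neg_abs_le (B k k), hx k]

theorem inv_apply_self_eq_det_submatrix_div {K : Type*} [Field K] {m : ℕ}
    (M : Matrix (Fin (m + 1)) (Fin (m + 1)) K) (i : Fin (m + 1)) :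
    M⁻¹ i i = (M.submatrix i.succAbove i.succAbove).det / M.det := by
  rw [inv_def, smul_apply, adjugate_fin_succ_eq_det_submatrix, Ring.inverse_eq_inv, smul_eq_mul,
    ← two_mul, pow_mul, neg_one_sq, one_pow, one_mul, div_eq_inv_mul]

theorem submatrix_diagonal_add_diagonal_mul {l α : Type*} [Fintype l] [DecidableEq l]
    [Semiring α] (d x : n → α) (B : Matrix n n α) {e : l → n} (he : Function.Injective e) :
    (diagonal d + diagonal x * B).submatrix e e =
      diagonal (d ∘ e) + diagonal (x ∘ e) * B.submatrix e e := by
  ext i j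
  simp [diagonal_apply, he.eq_iff]

theorem inv_diagonal_add_diagonal_mul_apply_self_pos {m : ℕ} (d x : Fin m → ℝ)
    (B : Matrix (Fin m) (Fin m) ℝ) (hx : ∀ i, 0 ≤ x i) (h : ∀ i, ∑ j, |B i j| * x j < d i)
    (i : Fin m) : 0 < (diagonal d + diagonal x * B)⁻¹ i i := by
  cases m with
  | zero => exact i.elim0
  | succ m =>
    rw [inv_apply_self_eq_det_submatrix_div,
      submatrix_diagonal_add_diagonal_mul _ _ _ (Fin.succAbove_right_injective (p := i))]
    refine div_pos (det_diagonal_add_diagonal_mul_pos _ _ _ (fun p => hx _) fun p => ?_)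
      (det_diagonal_add_diagonal_mul_pos d x B hx h)
    calc ∑ q, |B (i.succAbove p) (i.succAbove q)| * x (i.succAbove q)
        ≤ ∑ j, |B (i.succAbove p) j| * x j := by
          rw [Fin.sum_univ_succAbove _ i]
          exact le_add_of_nonneg_left (mul_nonneg (abs_nonneg _) (hx i))
      _ < d (i.succAbove p) := h _

end Matrix

open Matrix

/-- With `0 ≤ a_{ij} ≤ 1`, `x ∈ [0,1]^n`, `δ_i > 0`, the matrix
`M` with `m_{ii} = δ_i + Σ_k a_{ik} x_k` and `m_{ij} = a_{ij} x_i` (`i ≠ j`)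
is invertible and all diagonal entries of `M⁻¹` are strictly positive. -/
theorem stmt17 (n : ℕ) (A : Matrix (Fin n) (Fin n) ℝ)
    (hA : ∀ i j, A i j ∈ Set.Icc (0:ℝ) 1) (x : Fin n → ℝ)
    (hx : ∀ i, x i ∈ Set.Icc (0:ℝ) 1) (δ : Fin n → ℝ) (hδ : ∀ i, 0 < δ i)
    (M : Matrix (Fin n) (Fin n) ℝ)
    (hM : M = Matrix.of fun i j =>
        if i = j then δ i + ∑ k, A i k * x k else A i j * x i) :
    IsUnit M ∧ ∀ i, 0 < M⁻¹ i i := by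
  set B : Matrix (Fin n) (Fin n) ℝ := of fun i j => if i = j then 0 else A i j
  have hM' : M = diagonal (fun i => δ i + ∑ k, A i k * x k) + diagonal x * B := by
    ext i j
    by_cases hij : i = j <;> simp [hM, B, hij, mul_comm]
  have hx₀ : ∀ i, 0 ≤ x i := fun i => (hx i).1
  have hdom : ∀ i, ∑ j, |B i j| * x j < δ i + ∑ k, A i k * x k := fun i => by
    refine lt_add_of_pos_of_le (hδ i) (sum_le_sum fun j _ => ?_)
    refine mul_le_mul_of_nonneg_right ?_ (hx₀ j)
    simp only [B, of_apply]
    split_ifs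
    · simpa using (hA i j).1
    · exact (abs_of_nonneg (hA i j).1).le
  rw [hM']
  exact ⟨(isUnit_iff_isUnit_det _).mpr
      (det_diagonal_add_diagonal_mul_pos _ _ _ hx₀ hdom).ne'.isUnit,
    inv_diagonal_add_diagonal_mul_apply_self_pos _ _ _ hx₀ hdom⟩
end

section
/- Let 𝔸 be an n × n adjacency matrix (entries in {0,1}) and define k: ℝ^n → ℝ^n by k(x)_i = x_i(1 + Σ_j a_{ij}x_j). Then the Jacobian matrix of k at any x ∈ [0,1]^n equals I + diag(𝔸x) + diag(x)𝔸, and this Jacobian has strictly positive determinant; hence k is locally invertible at every x ∈ [0,1]^n with C^∞ local inverse. -/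
open Matrix

/-- Kernel triviality: if `A` and `x` are entrywise nonnegative, then
`(1 + diag(Ax) + diag(x)A) v = 0` implies `v = 0`. -/
lemma aux_ker_triv {n : ℕ} (A : Matrix (Fin n) (Fin n) ℝ)
    (hA : ∀ i j, 0 ≤ A i j) (x : Fin n → ℝ) (hx : ∀ i, 0 ≤ x i)
    (v : Fin n → ℝ)
    (hv : (1 + Matrix.diagonal (A.mulVec x) + Matrix.diagonal x * A).mulVec v = 0) :
    v = 0 := by
  have hAx : ∀ i, 0 ≤ (A.mulVec x) i := by
    intro i
    simp only [Matrix.mulVec, dotProduct]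
    exact Finset.sum_nonneg fun j _ => mul_nonneg (hA i j) (hx j)
  have eqi : ∀ i, v i * (1 + (A.mulVec x) i) + x i * ((A.mulVec v) i) = 0 := by
    intro i
    have h := congrFun hv i
    simp only [Matrix.add_mulVec, Matrix.one_mulVec, ← Matrix.mulVec_mulVec,
      Pi.add_apply, Matrix.mulVec_diagonal, Pi.zero_apply] at h
    linear_combination h
  have step1 : ∀ i, x i = 0 → v i = 0 := by
    intro i h0
    have h := eqi i
    rw [h0] at h
    simp only [zero_mul, add_zero] at h
    have hpos : (0:ℝ) < 1 + (A.mulVec x) i := by linarith [hAx i]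
    rcases mul_eq_zero.mp h with h'|h'
    · exact h'
    · exact absurd h' (ne_of_gt hpos)
  by_contra hv0
  obtain ⟨j0, hj0⟩ : ∃ j, v j ≠ 0 := by
    by_contra h
    push_neg at h
    exact hv0 (funext h)
  set u : Fin n → ℝ := fun j => |v j| / x j with hu
  obtain ⟨i, -, hmax⟩ := Finset.exists_max_image Finset.univ u ⟨j0, Finset.mem_univ _⟩
  have hxj0 : 0 < x j0 :=
    lt_of_le_of_ne (hx j0) fun h => hj0 (step1 j0 h.symm)
  have huj0 : 0 < u j0 := div_pos (abs_pos.mpr hj0) hxj0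
  have hui : 0 < u i := lt_of_lt_of_le huj0 (hmax j0 (Finset.mem_univ _))
  have hvi : v i ≠ 0 := by
    intro h
    rw [hu] at hui
    simp [h] at hui
  have hxi : 0 < x i :=
    lt_of_le_of_ne (hx i) fun h => hvi (step1 i h.symm)
  have hvi_eq : |v i| = x i * u i := by
    rw [hu]
    field_simp
  have hbound : ∀ j, |v j| ≤ x j * u i := by
    intro j
    rcases eq_or_lt_of_le (hx j) with h|h
    · rw [step1 j h.symm]
      simp only [abs_zero, ← h, zero_mul]
      exact le_refl 0
    · have hj : |v j| = x j * u j := by rw [hu]; field_simp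
      rw [hj]
      exact mul_le_mul_of_nonneg_left (hmax j (Finset.mem_univ _)) (le_of_lt h)
  have h2 : |v i| * (1 + (A.mulVec x) i) = x i * |(A.mulVec v) i| := by
    have h1 : v i * (1 + (A.mulVec x) i) = -(x i * (A.mulVec v) i) := by
      linarith [eqi i]
    rw [← abs_of_pos (show (0:ℝ) < 1 + (A.mulVec x) i by linarith [hAx i]),
      ← abs_mul, h1, abs_neg, abs_mul, abs_of_nonneg (hx i)]
  have h3 : |(A.mulVec v) i| ≤ ∑ j, A i j * (x j * u i) := by
    calc |(A.mulVec v) i| = |∑ j, A i j * v j| := by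
          simp [Matrix.mulVec, dotProduct]
      _ ≤ ∑ j, |A i j * v j| := Finset.abs_sum_le_sum_abs _ _
      _ ≤ ∑ j, A i j * (x j * u i) := by
          refine Finset.sum_le_sum fun j _ => ?_
          rw [abs_mul, abs_of_nonneg (hA i j)]
          exact mul_le_mul_of_nonneg_left (hbound j) (hA i j)
  have h4 : ∑ j, A i j * (x j * u i) = (A.mulVec x) i * u i := by
    simp [Matrix.mulVec, dotProduct, Finset.sum_mul, mul_assoc]
  have habs : |v i| * (1 + (A.mulVec x) i) ≤ |v i| * (A.mulVec x) i := by
    calc |v i| * (1 + (A.mulVec x) i) = x i * |(A.mulVec v) i| := h2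
      _ ≤ x i * ((A.mulVec x) i * u i) := by
          refine mul_le_mul_of_nonneg_left ?_ (hx i)
          rw [← h4]; exact h3
      _ = (x i * u i) * (A.mulVec x) i := by ring
      _ = |v i| * (A.mulVec x) i := by rw [hvi_eq]
  have hpos : (0:ℝ) < |v i| := abs_pos.mpr hvi
  nlinarith [habs, hpos]

/-- Nonvanishing determinant. -/
lemma aux_det_ne_zero {n : ℕ} (A : Matrix (Fin n) (Fin n) ℝ)
    (hA : ∀ i j, 0 ≤ A i j) (x : Fin n → ℝ) (hx : ∀ i, 0 ≤ x i) :
    (1 + Matrix.diagonal (A.mulVec x) + Matrix.diagonal x * A).det ≠ 0 := by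
  set M := 1 + Matrix.diagonal (A.mulVec x) + Matrix.diagonal x * A with hMdef
  have hinj : Function.Injective M.mulVec := by
    intro v w h
    have h0 : M.mulVec (v - w) = 0 := by
      rw [Matrix.mulVec_sub, h, sub_self]
    have := aux_ker_triv A hA x hx (v - w) h0
    exact sub_eq_zero.mp this
  have hU : IsUnit M := Matrix.mulVec_injective_iff_isUnit.mp hinj
  intro hdet
  exact (isUnit_iff_ne_zero.mp ((Matrix.isUnit_iff_isUnit_det M).mp hU)) hdet

/-- Positive determinant, via a homotopy `t ↦ det M(t x)` and the IVT. -/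
lemma aux_det_pos {n : ℕ} (A : Matrix (Fin n) (Fin n) ℝ)
    (hA : ∀ i j, 0 ≤ A i j) (x : Fin n → ℝ) (hx : ∀ i, 0 ≤ x i) :
    0 < (1 + Matrix.diagonal (A.mulVec x) + Matrix.diagonal x * A).det := by
  set f : ℝ → ℝ := fun t =>
    (1 + Matrix.diagonal (A.mulVec (t • x)) + Matrix.diagonal (t • x) * A).det with hf
  have hf0 : f 0 = 1 := by
    have h0 : (0:ℝ) • x = 0 := zero_smul ℝ x
    have hd : Matrix.diagonal (0 : Fin n → ℝ) = 0 := Matrix.diagonal_zero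
    rw [hf]
    simp only [h0, Matrix.mulVec_zero, hd, Matrix.zero_mul,
      add_zero, Matrix.det_one]
  have hcont : Continuous f := by
    apply Continuous.matrix_det
    apply Continuous.add
    apply Continuous.add
    · exact continuous_const
    · exact Continuous.matrix_diagonal (by
        apply Continuous.matrix_mulVec continuous_const
        exact continuous_id.smul continuous_const)
    · exact Continuous.matrix_mul
        (Continuous.matrix_diagonal (continuous_id.smul continuous_const))
        continuous_const
  have hne : ∀ t ∈ Set.Icc (0:ℝ) 1, f t ≠ 0 := by
    intro t ht
    exact aux_det_ne_zero A hA (t • x) fun i => mul_nonneg ht.1 (hx i)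
  have hf1 : f 1 = (1 + Matrix.diagonal (A.mulVec x) + Matrix.diagonal x * A).det := by
    simp [hf]
  rw [← hf1]
  rcases lt_or_gt_of_ne (hne 1 ⟨zero_le_one, le_refl 1⟩) with hlt|hgt
  · exfalso
    have hmem : (0:ℝ) ∈ Set.Icc (f 1) (f 0) := ⟨le_of_lt hlt, by rw [hf0]; exact zero_le_one⟩
    obtain ⟨t, ht, hft⟩ := intermediate_value_Icc' zero_le_one hcont.continuousOn hmem
    exact hne t ht hft
  · exact hgt

/-- For an adjacency matrix `𝔸` (entries in `{0,1}`) and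
`k(x)_i = x_i(1 + Σ_j a_{ij} x_j)`, the Jacobian of `k` at any `x ∈ [0,1]^n`
equals `I + diag(𝔸x) + diag(x)𝔸`, this matrix has positive determinant, and
`k` is locally invertible at `x` with `C^∞` local inverse. -/
theorem stmt18 (n : ℕ) (A : Matrix (Fin n) (Fin n) ℝ)
    (hA : ∀ i j, A i j = 0 ∨ A i j = 1)
    (K : (Fin n → ℝ) → (Fin n → ℝ))
    (hK : ∀ x i, K x i = x i * (1 + ∑ j, A i j * x j))
    (x : Fin n → ℝ) (hx : ∀ i, x i ∈ Set.Icc (0:ℝ) 1)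
    (M : Matrix (Fin n) (Fin n) ℝ)
    (hM : M = 1 + Matrix.diagonal (A.mulVec x) + Matrix.diagonal x * A) :
    fderiv ℝ K x = LinearMap.toContinuousLinearMap (Matrix.mulVecLin M) ∧
    0 < M.det ∧
    ∃ g : (Fin n → ℝ) → (Fin n → ℝ),
      ContDiffAt ℝ (⊤ : ℕ∞) g (K x) ∧
      (∀ᶠ y in nhds x, g (K y) = y) ∧
      (∀ᶠ z in nhds (K x), K (g z) = z) := by
  have hKF : K = fun y i => y i * (1 + ∑ j, A i j * y j) :=
    funext fun y => funext (hK y)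
  subst hKF
  set F : (Fin n → ℝ) → (Fin n → ℝ) := fun y i => y i * (1 + ∑ j, A i j * y j) with hFdef
  have hA' : ∀ i j, 0 ≤ A i j := by
    intro i j
    rcases hA i j with h|h <;> rw [h] <;> norm_num
  have hx' : ∀ i, 0 ≤ x i := fun i => (hx i).1
  -- determinant positivity
  have hdetpos : 0 < M.det := by
    rw [hM]; exact aux_det_pos A hA' x hx'
  -- smoothness of F
  have hF : ContDiff ℝ (⊤ : ℕ∞) F := by
    apply contDiff_pi.mpr
    intro i
    exact (contDiff_pi.mp contDiff_id i).mul
      (contDiff_const.add (ContDiff.sum fun j _ =>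
        contDiff_const.mul (contDiff_pi.mp contDiff_id j)))
  -- the derivative
  set L : (Fin n → ℝ) →L[ℝ] (Fin n → ℝ) :=
    LinearMap.toContinuousLinearMap (Matrix.mulVecLin M) with hL
  have hDF : HasFDerivAt F L x := by
    apply hasFDerivAt_pi''
    intro i
    set Lh : (Fin n → ℝ) →L[ℝ] ℝ := ∑ j, A i j • ContinuousLinearMap.proj j with hLh
    have hLh_apply : ∀ v : Fin n → ℝ, Lh v = ∑ j, A i j * v j := by
      intro v
      simp [hLh, ContinuousLinearMap.sum_apply, ContinuousLinearMap.smul_apply,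
        ContinuousLinearMap.proj_apply, smul_eq_mul]
    have hh : HasFDerivAt (fun y : Fin n → ℝ => 1 + ∑ j, A i j * y j) Lh x := by
      have h0 : HasFDerivAt (fun y : Fin n → ℝ => (1:ℝ) + Lh y) Lh x :=
        Lh.hasFDerivAt.const_add 1
      have : (fun y : Fin n → ℝ => (1:ℝ) + Lh y)
          = fun y : Fin n → ℝ => 1 + ∑ j, A i j * y j := by
        funext y; rw [hLh_apply y]
      rwa [this] at h0
    have hg : HasFDerivAt (fun y : Fin n → ℝ => y i)
        (ContinuousLinearMap.proj i : (Fin n → ℝ) →L[ℝ] ℝ) x :=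
      hasFDerivAt_apply i x
    have hmul := hg.mul hh
    have heq : ((ContinuousLinearMap.proj i : (Fin n → ℝ) →L[ℝ] ℝ).comp L)
        = x i • Lh + (1 + ∑ j, A i j * x j) • (ContinuousLinearMap.proj i) := by
      apply ContinuousLinearMap.ext
      intro v
      have hLv : L v = M.mulVec v := rfl
      have hMv : M.mulVec v i = v i + (A.mulVec x) i * v i + x i * (A.mulVec v) i := by
        rw [hM]
        simp only [Matrix.add_mulVec, Matrix.one_mulVec, ← Matrix.mulVec_mulVec,
          Pi.add_apply, Matrix.mulVec_diagonal]
      simp only [ContinuousLinearMap.comp_apply, ContinuousLinearMap.add_apply,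
        ContinuousLinearMap.smul_apply, ContinuousLinearMap.proj_apply, smul_eq_mul,
        hLv, hMv, hLh_apply v]
      have hax : (A.mulVec x) i = ∑ j, A i j * x j := by
        simp [Matrix.mulVec, dotProduct]
      have hav : (A.mulVec v) i = ∑ j, A i j * v j := by
        simp [Matrix.mulVec, dotProduct]
      rw [hax, hav]
      ring
    rw [heq]
    exact hmul
  refine ⟨hDF.fderiv, hdetpos, ?_⟩
  -- local inverse
  have hdet_unit : IsUnit M.det := isUnit_iff_ne_zero.mpr (ne_of_gt hdetpos)
  have hInv : Invertible M := M.invertibleOfIsUnitDet hdet_unit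
  set eL : (Fin n → ℝ) ≃ₗ[ℝ] (Fin n → ℝ) := M.toLinearEquiv' hInv with heL
  set e : (Fin n → ℝ) ≃L[ℝ] (Fin n → ℝ) := eL.toContinuousLinearEquiv with he
  have hecoe : (e : (Fin n → ℝ) →L[ℝ] (Fin n → ℝ)) = L := by
    apply ContinuousLinearMap.ext
    intro v
    show eL v = L v
    have h1 : eL v = Matrix.toLin' M v := rfl
    have h2 : L v = M.mulVec v := rfl
    rw [h1, h2, Matrix.toLin'_apply]
  have hDF' : HasFDerivAt F (e : (Fin n → ℝ) →L[ℝ] (Fin n → ℝ)) x := by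
    rw [hecoe]; exact hDF
  have hcd : ContDiffAt ℝ (⊤ : ℕ∞) F x := hF.contDiffAt
  refine ⟨hcd.localInverse hDF' (by simp), hcd.to_localInverse hDF' (by simp), ?_, ?_⟩
  · exact (hcd.hasStrictFDerivAt' hDF' (by simp)).eventually_left_inverse
  · exact (hcd.hasStrictFDerivAt' hDF' (by simp)).eventually_right_inverse
end

section
/- For the weighted h-categorizer semantics with adjacency matrix 𝔸, the fixed-point map h: [0,1]^n → [0,1]^n (sending initial weights w to the unique fixed point of x_i = w_i/(1+Σ_j a_{ij}x_j)) is smooth and strictly monotone in each coordinate: ∂h_i/∂w_i(w) > 0 for all w and i. In particular, increasing a single initial weight w_i strictly increases the acceptability degree h_i(w). -/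
open Finset

private lemma sum_abs_le {n : ℕ} (a : Matrix (Fin n) (Fin n) ℝ) (ha : ∀ k j, 0 ≤ a k j)
    (d : Fin n → ℝ) (k : Fin n) :
    |∑ j, a k j * d j| ≤ ∑ j, a k j * |d j| := by
  calc |∑ j, a k j * d j| ≤ ∑ j, |a k j * d j| := Finset.abs_sum_le_sum_abs _ _
  _ = ∑ j, a k j * |d j| := by
      refine Finset.sum_congr rfl fun j _ => ?_
      rw [abs_mul, abs_of_nonneg (ha k j)]

private lemma key_zero {n : ℕ} (a : Matrix (Fin n) (Fin n) ℝ) (ha : ∀ k j, 0 ≤ a k j)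
    {t d : Fin n → ℝ} (ht : ∀ k, 0 ≤ t k) {c : ℝ} (hc : 0 < c)
    (H : ∀ k, |d k| * (c + ∑ j, a k j * t j) ≤ t k * ∑ j, a k j * |d j|) :
    d = 0 := by
  have hT : ∀ k, 0 ≤ ∑ j, a k j * t j := fun k =>
    Finset.sum_nonneg fun j _ => mul_nonneg (ha k j) (ht j)
  have hd0 : ∀ k, t k = 0 → d k = 0 := by
    intro k hk
    have := H k
    rw [hk, zero_mul] at this
    have h1 : 0 < c + ∑ j, a k j * t j := by linarith [hT k]
    have : |d k| ≤ 0 := by nlinarith [abs_nonneg (d k)]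
    simpa [abs_nonpos_iff] using this
  rcases isEmpty_or_nonempty (Fin n) with hE | hE
  · funext k; exact (hE.false k).elim
  set r : Fin n → ℝ := fun k => if t k = 0 then 0 else |d k| / t k with hr
  have hdr : ∀ k, |d k| = r k * t k := by
    intro k
    by_cases hk : t k = 0
    · simp [hr, hk, hd0 k hk]
    · simp only [hr, hk, if_false]
      rw [div_mul_cancel₀ _ hk]
  have hr0 : ∀ k, 0 ≤ r k := by
    intro k
    by_cases hk : t k = 0
    · simp [hr, hk]
    · simp only [hr, hk, if_false]
      exact div_nonneg (abs_nonneg _) (ht k)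
  obtain ⟨k0, -, hk0⟩ := Finset.exists_mem_eq_sup' (Finset.univ_nonempty (α := Fin n)) r
  set m := Finset.univ.sup' Finset.univ_nonempty r with hmdef
  have hm : ∀ j, r j ≤ m := fun j => Finset.le_sup' r (Finset.mem_univ j)
  have bound : ∀ k, ∑ j, a k j * |d j| ≤ m * ∑ j, a k j * t j := by
    intro k
    rw [Finset.mul_sum]
    refine Finset.sum_le_sum fun j _ => ?_
    rw [hdr j]
    calc a k j * (r j * t j) ≤ a k j * (m * t j) := by
          exact mul_le_mul_of_nonneg_left (mul_le_mul_of_nonneg_right (hm j) (ht j)) (ha k j)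
    _ = m * (a k j * t j) := by ring
  by_cases hm0 : m ≤ 0
  · funext k
    have : |d k| ≤ 0 := by
      rw [hdr k]
      exact mul_nonpos_of_nonpos_of_nonneg (le_trans (hm k) hm0) (ht k)
    simpa [abs_nonpos_iff] using this
  · exfalso
    push_neg at hm0
    have htk0 : 0 < t k0 := by
      rcases (ht k0).lt_or_eq with h | h
      · exact h
      · exfalso
        have hrk : r k0 = 0 := by simp [hr, ← h]
        rw [hk0, hrk] at hm0
        exact lt_irrefl _ hm0
    have := H k0
    rw [hdr k0, ← hk0] at this
    nlinarith [hT k0, mul_le_mul_of_nonneg_left (bound k0) (le_of_lt htk0), mul_pos (mul_pos hm0 htk0) hc]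

private lemma key_pos {n : ℕ} (a : Matrix (Fin n) (Fin n) ℝ) (ha : ∀ k j, 0 ≤ a k j)
    {t d : Fin n → ℝ} (ht : ∀ k, 0 ≤ t k) {c Δ : ℝ} (hc : 0 < c) (hΔ : 0 < Δ) (i : Fin n)
    (Hk : ∀ k, k ≠ i → |d k| * (c + ∑ j, a k j * t j) ≤ t k * ∑ j, a k j * |d j|)
    (Hi : d i * (c + ∑ j, a i j * t j) = Δ - t i * ∑ j, a i j * d j) :
    0 < d i := by
  have hT : ∀ k, 0 ≤ ∑ j, a k j * t j := fun k =>
    Finset.sum_nonneg fun j _ => mul_nonneg (ha k j) (ht j)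
  by_cases hti : t i = 0
  · rw [hti, zero_mul, sub_zero] at Hi
    by_contra hdi
    push_neg at hdi
    have h1 : d i * (c + ∑ j, a i j * t j) ≤ 0 :=
      mul_nonpos_of_nonpos_of_nonneg hdi (by linarith [hT i])
    linarith
  have hti' : 0 < t i := lt_of_le_of_ne (ht i) (Ne.symm hti)
  have hd0 : ∀ k, t k = 0 → d k = 0 := by
    intro k hk
    rcases eq_or_ne k i with rfl | hki
    · exact absurd hk hti
    · have := Hk k hki
      rw [hk, zero_mul] at this
      have h1 : 0 < c + ∑ j, a k j * t j := by linarith [hT k]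
      have : |d k| ≤ 0 := by nlinarith [abs_nonneg (d k)]
      simpa [abs_nonpos_iff] using this
  have hE : Nonempty (Fin n) := ⟨i⟩
  set r : Fin n → ℝ := fun k => if t k = 0 then 0 else |d k| / t k with hr
  have hdr : ∀ k, |d k| = r k * t k := by
    intro k
    by_cases hk : t k = 0
    · simp [hr, hk, hd0 k hk]
    · simp only [hr, hk, if_false]
      rw [div_mul_cancel₀ _ hk]
  have hr0 : ∀ k, 0 ≤ r k := by
    intro k
    by_cases hk : t k = 0
    · simp [hr, hk]
    · simp only [hr, hk, if_false]
      exact div_nonneg (abs_nonneg _) (ht k)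
  obtain ⟨k0, -, hk0⟩ := Finset.exists_mem_eq_sup' (Finset.univ_nonempty (α := Fin n)) r
  set m := Finset.univ.sup' Finset.univ_nonempty r with hmdef
  have hm : ∀ j, r j ≤ m := fun j => Finset.le_sup' r (Finset.mem_univ j)
  have bound : ∀ k, ∑ j, a k j * |d j| ≤ m * ∑ j, a k j * t j := by
    intro k
    rw [Finset.mul_sum]
    refine Finset.sum_le_sum fun j _ => ?_
    rw [hdr j]
    calc a k j * (r j * t j) ≤ a k j * (m * t j) :=
          mul_le_mul_of_nonneg_left (mul_le_mul_of_nonneg_right (hm j) (ht j)) (ha k j)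
    _ = m * (a k j * t j) := by ring
  by_cases hm0 : m ≤ 0
  · exfalso
    have hdz : ∀ k, d k = 0 := by
      intro k
      have : |d k| ≤ 0 := by
        rw [hdr k]
        exact mul_nonpos_of_nonpos_of_nonneg (le_trans (hm k) hm0) (ht k)
      simpa [abs_nonpos_iff] using this
    have hs : ∑ j, a i j * d j = 0 := by
      refine Finset.sum_eq_zero fun j _ => by rw [hdz j, mul_zero]
    rw [hdz i, hs, zero_mul, mul_zero, sub_zero] at Hi
    linarith
  push_neg at hm0
  have htk0 : 0 < t k0 := by
    rcases (ht k0).lt_or_eq with h | h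
    · exact h
    · exfalso
      have hrk : r k0 = 0 := by simp [hr, ← h]
      rw [hk0, hrk] at hm0
      exact lt_irrefl _ hm0
  rcases eq_or_ne k0 i with rfl | hki
  · -- max attained at i
    by_contra hdi
    push_neg at hdi
    have habs : |d k0| = -(d k0) := abs_of_nonpos hdi
    have hdi' : d k0 = -(m * t k0) := by
      have := hdr k0
      rw [habs, ← hk0] at this
      linarith
    have hS : ∑ j, a k0 j * d j ≤ m * ∑ j, a k0 j * t j := by
      refine le_trans (Finset.sum_le_sum fun j _ => ?_) (bound k0)
      exact mul_le_mul_of_nonneg_left (le_abs_self _) (ha k0 j)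
    rw [hdi'] at Hi
    nlinarith [hT k0, mul_le_mul_of_nonneg_left hS (le_of_lt htk0),
      mul_pos (mul_pos hm0 htk0) hc]
  · exfalso
    have := Hk k0 hki
    rw [hdr k0, ← hk0] at this
    nlinarith [hT k0, mul_le_mul_of_nonneg_left (bound k0) (le_of_lt htk0),
      mul_pos (mul_pos hm0 htk0) hc]



private lemma box_mem {n : ℕ} {x : Fin n → ℝ} (hx : x ∈ unitBox n) (k : Fin n) :
    0 ≤ x k ∧ x k ≤ 1 := hx k (Set.mem_univ k)

private lemma fp_unique {n : ℕ} (A : Matrix (Fin n) (Fin n) ℝ) (hA : ∀ k j, 0 ≤ A k j)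
    {x y w : Fin n → ℝ} (hx : x ∈ unitBox n) (hy : y ∈ unitBox n)
    (hxe : ∀ k, x k * (1 + ∑ j, A k j * x j) = w k)
    (hye : ∀ k, y k * (1 + ∑ j, A k j * y j) = w k) :
    x = y := by
  set t : Fin n → ℝ := fun k => x k + y k with htdef
  set d : Fin n → ℝ := fun k => y k - x k with hddef
  have ht : ∀ k, 0 ≤ t k := fun k => add_nonneg (box_mem hx k).1 (box_mem hy k).1
  have hsplit : ∀ k, ∑ j, A k j * t j = (∑ j, A k j * x j) + ∑ j, A k j * y j := by
    intro k
    rw [← Finset.sum_add_distrib]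
    exact Finset.sum_congr rfl fun j _ => by simp [htdef]; ring
  have hdsplit : ∀ k, ∑ j, A k j * d j = (∑ j, A k j * y j) - ∑ j, A k j * x j := by
    intro k
    rw [← Finset.sum_sub_distrib]
    exact Finset.sum_congr rfl fun j _ => by simp [hddef]; ring
  have key : ∀ k, d k * (2 + ∑ j, A k j * t j) = -(t k * ∑ j, A k j * d j) := by
    intro k
    rw [hsplit, hdsplit]
    simp only [hddef, htdef]
    linear_combination 2 * hye k - 2 * hxe k
  have H : ∀ k, |d k| * (2 + ∑ j, A k j * t j) ≤ t k * ∑ j, A k j * |d j| := by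
    intro k
    have hT : 0 ≤ ∑ j, A k j * t j :=
      Finset.sum_nonneg fun j _ => mul_nonneg (hA k j) (ht j)
    calc |d k| * (2 + ∑ j, A k j * t j) = |d k * (2 + ∑ j, A k j * t j)| := by
          rw [abs_mul, abs_of_nonneg (by linarith : (0:ℝ) ≤ 2 + ∑ j, A k j * t j)]
    _ = t k * |∑ j, A k j * d j| := by
          rw [key k, abs_neg, abs_mul, abs_of_nonneg (ht k)]
    _ ≤ t k * ∑ j, A k j * |d j| :=
          mul_le_mul_of_nonneg_left (sum_abs_le A hA d k) (ht k)
  have hd := key_zero A hA ht (by norm_num : (0:ℝ) < 2) H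
  funext k
  have hk := congrFun hd k
  simp only [hddef, Pi.zero_apply] at hk
  linarith

private lemma fp_mono {n : ℕ} (A : Matrix (Fin n) (Fin n) ℝ) (hA : ∀ k j, 0 ≤ A k j)
    {x y w w' : Fin n → ℝ} (hx : x ∈ unitBox n) (hy : y ∈ unitBox n)
    (hxe : ∀ k, x k * (1 + ∑ j, A k j * x j) = w k)
    (hye : ∀ k, y k * (1 + ∑ j, A k j * y j) = w' k)
    (i : Fin n) (hww : ∀ j, j ≠ i → w' j = w j) (hlt : w i < w' i) :
    x i < y i := by
  set t : Fin n → ℝ := fun k => x k + y k with htdef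
  set d : Fin n → ℝ := fun k => y k - x k with hddef
  have ht : ∀ k, 0 ≤ t k := fun k => add_nonneg (box_mem hx k).1 (box_mem hy k).1
  have hsplit : ∀ k, ∑ j, A k j * t j = (∑ j, A k j * x j) + ∑ j, A k j * y j := by
    intro k
    rw [← Finset.sum_add_distrib]
    exact Finset.sum_congr rfl fun j _ => by simp [htdef]; ring
  have hdsplit : ∀ k, ∑ j, A k j * d j = (∑ j, A k j * y j) - ∑ j, A k j * x j := by
    intro k
    rw [← Finset.sum_sub_distrib]
    exact Finset.sum_congr rfl fun j _ => by simp [hddef]; ring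
  have key : ∀ k, d k * (2 + ∑ j, A k j * t j)
      = 2 * (w' k - w k) - t k * ∑ j, A k j * d j := by
    intro k
    rw [hsplit, hdsplit]
    simp only [hddef, htdef]
    linear_combination 2 * hye k - 2 * hxe k
  have Hk : ∀ k, k ≠ i → |d k| * (2 + ∑ j, A k j * t j) ≤ t k * ∑ j, A k j * |d j| := by
    intro k hki
    have hT : 0 ≤ ∑ j, A k j * t j :=
      Finset.sum_nonneg fun j _ => mul_nonneg (hA k j) (ht j)
    have keyk : d k * (2 + ∑ j, A k j * t j) = -(t k * ∑ j, A k j * d j) := by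
      rw [key k, hww k hki]; ring
    calc |d k| * (2 + ∑ j, A k j * t j) = |d k * (2 + ∑ j, A k j * t j)| := by
          rw [abs_mul, abs_of_nonneg (by linarith : (0:ℝ) ≤ 2 + ∑ j, A k j * t j)]
    _ = t k * |∑ j, A k j * d j| := by
          rw [keyk, abs_neg, abs_mul, abs_of_nonneg (ht k)]
    _ ≤ t k * ∑ j, A k j * |d j| :=
          mul_le_mul_of_nonneg_left (sum_abs_le A hA d k) (ht k)
  have Hi : d i * (2 + ∑ j, A i j * t j)
      = 2 * (w' i - w i) - t i * ∑ j, A i j * d j := key i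
  have := key_pos A hA ht (by norm_num : (0:ℝ) < 2)
    (by linarith : (0:ℝ) < 2 * (w' i - w i)) i Hk Hi
  simp only [hddef] at this
  linarith

private lemma M_pos {n : ℕ} (A : Matrix (Fin n) (Fin n) ℝ) (hA : ∀ k j, 0 ≤ A k j)
    {x v : Fin n → ℝ} (hx : x ∈ unitBox n) (i : Fin n)
    (hv : ∀ k, x k * (∑ j, A k j * v j) + (1 + ∑ j, A k j * x j) * v k
      = (if k = i then (1:ℝ) else 0)) :
    0 < v i := by
  have ht : ∀ k, 0 ≤ x k := fun k => (box_mem hx k).1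
  have Hk : ∀ k, k ≠ i → |v k| * (1 + ∑ j, A k j * x j) ≤ x k * ∑ j, A k j * |v j| := by
    intro k hki
    have hT : 0 ≤ ∑ j, A k j * x j :=
      Finset.sum_nonneg fun j _ => mul_nonneg (hA k j) (ht j)
    have keyk : v k * (1 + ∑ j, A k j * x j) = -(x k * ∑ j, A k j * v j) := by
      have := hv k
      rw [if_neg hki] at this
      linarith
    calc |v k| * (1 + ∑ j, A k j * x j) = |v k * (1 + ∑ j, A k j * x j)| := by
          rw [abs_mul, abs_of_nonneg (by linarith : (0:ℝ) ≤ 1 + ∑ j, A k j * x j)]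
    _ = x k * |∑ j, A k j * v j| := by
          rw [keyk, abs_neg, abs_mul, abs_of_nonneg (ht k)]
    _ ≤ x k * ∑ j, A k j * |v j| :=
          mul_le_mul_of_nonneg_left (sum_abs_le A hA v k) (ht k)
  have Hi : v i * (1 + ∑ j, A i j * x j) = 1 - x i * ∑ j, A i j * v j := by
    have := hv i
    rw [if_pos rfl] at this
    linarith
  exact key_pos A hA ht one_pos one_pos i Hk Hi

private lemma M_inj {n : ℕ} (A : Matrix (Fin n) (Fin n) ℝ) (hA : ∀ k j, 0 ≤ A k j)
    {x v : Fin n → ℝ} (hx : x ∈ unitBox n)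
    (hv : ∀ k, x k * (∑ j, A k j * v j) + (1 + ∑ j, A k j * x j) * v k = 0) :
    v = 0 := by
  have ht : ∀ k, 0 ≤ x k := fun k => (box_mem hx k).1
  refine key_zero A hA ht one_pos fun k => ?_
  have hT : 0 ≤ ∑ j, A k j * x j :=
    Finset.sum_nonneg fun j _ => mul_nonneg (hA k j) (ht j)
  have keyk : v k * (1 + ∑ j, A k j * x j) = -(x k * ∑ j, A k j * v j) := by
    linarith [hv k]
  calc |v k| * (1 + ∑ j, A k j * x j) = |v k * (1 + ∑ j, A k j * x j)| := by
        rw [abs_mul, abs_of_nonneg (by linarith : (0:ℝ) ≤ 1 + ∑ j, A k j * x j)]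
  _ = x k * |∑ j, A k j * v j| := by
        rw [keyk, abs_neg, abs_mul, abs_of_nonneg (ht k)]
  _ ≤ x k * ∑ j, A k j * |v j| :=
        mul_le_mul_of_nonneg_left (sum_abs_le A hA v k) (ht k)

open ContinuousLinearMap in
private noncomputable def Lrow {n : ℕ} (A : Matrix (Fin n) (Fin n) ℝ) (k : Fin n) :
    (Fin n → ℝ) →L[ℝ] ℝ :=
  ∑ j, A k j • ContinuousLinearMap.proj j

private lemma Lrow_apply {n : ℕ} (A : Matrix (Fin n) (Fin n) ℝ) (k : Fin n)
    (v : Fin n → ℝ) : Lrow A k v = ∑ j, A k j * v j := by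
  simp [Lrow, ContinuousLinearMap.sum_apply]

private noncomputable def Kmap {n : ℕ} (A : Matrix (Fin n) (Fin n) ℝ) :
    (Fin n → ℝ) → (Fin n → ℝ) :=
  fun x k => x k * (1 + ∑ j, A k j * x j)

private noncomputable def Mclm {n : ℕ} (A : Matrix (Fin n) (Fin n) ℝ) (x : Fin n → ℝ) :
    (Fin n → ℝ) →L[ℝ] (Fin n → ℝ) :=
  ContinuousLinearMap.pi fun k =>
    x k • Lrow A k + (1 + ∑ j, A k j * x j) • ContinuousLinearMap.proj k

private lemma Mclm_apply {n : ℕ} (A : Matrix (Fin n) (Fin n) ℝ) (x v : Fin n → ℝ)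
    (k : Fin n) :
    Mclm A x v k = x k * (∑ j, A k j * v j) + (1 + ∑ j, A k j * x j) * v k := by
  simp [Mclm, ContinuousLinearMap.pi_apply, Lrow_apply]

open scoped ContDiff in
private lemma Kmap_contDiff {n : ℕ} (A : Matrix (Fin n) (Fin n) ℝ) :
    ContDiff ℝ ω (Kmap A) := by
  rw [show Kmap A = fun x k => x k * (1 + ∑ j, A k j * x j) from rfl]
  refine contDiff_pi.2 fun k => ?_
  have h1 : ContDiff ℝ ω fun x : Fin n → ℝ => x k :=
    (ContinuousLinearMap.proj (R := ℝ) (φ := fun _ : Fin n => ℝ) k).contDiff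
  have h2 : ContDiff ℝ ω fun x : Fin n → ℝ => 1 + ∑ j, A k j * x j := by
    have hfun : (fun x : Fin n → ℝ => 1 + ∑ j, A k j * x j)
        = fun x => 1 + Lrow A k x := by
      funext x; rw [Lrow_apply]
    rw [hfun]
    exact contDiff_const.add (Lrow A k).contDiff
  exact h1.mul h2

private lemma Kmap_hasFDerivAt {n : ℕ} (A : Matrix (Fin n) (Fin n) ℝ) (x : Fin n → ℝ) :
    HasFDerivAt (Kmap A) (Mclm A x) x := by
  apply hasFDerivAt_pi''
  intro k
  have h1 : HasFDerivAt (fun y : Fin n → ℝ => y k)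
      (ContinuousLinearMap.proj (R := ℝ) (φ := fun _ : Fin n => ℝ) k) x :=
    hasFDerivAt_apply k x
  have h2 : HasFDerivAt (fun y : Fin n → ℝ => 1 + ∑ j, A k j * y j) (Lrow A k) x := by
    have := ((Lrow A k).hasFDerivAt (x := x)).const_add (1:ℝ)
    exact this.congr_of_eventuallyEq (by filter_upwards with y; rw [Lrow_apply])
  have h3 := h1.mul h2
  have h4 : (ContinuousLinearMap.proj k).comp (Mclm A x)
      = x k • Lrow A k + (1 + ∑ j, A k j * x j) • ContinuousLinearMap.proj k := by
    refine ContinuousLinearMap.ext fun v => ?_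
    simp [Mclm_apply, Lrow_apply]
  rw [h4]
  exact h3


open Topology Filter in
open scoped ContDiff in
/-- For the weighted h-categorizer semantics with adjacency
matrix `𝔸`, the fixed-point map `h` sending initial weights `w` to the unique
fixed point of `x_i = w_i/(1 + Σ_j a_{ij} x_j)` is smooth on `[0,1]^n`, its
partial derivative `∂h_i/∂w_i` is strictly positive, and strictly increasing
a single coordinate of `w` strictly increases `h_i(w)`. -/
theorem stmt19 (n : ℕ) (A : Matrix (Fin n) (Fin n) ℝ)
    (hA : ∀ i j, A i j = 0 ∨ A i j = 1)
    (h : (Fin n → ℝ) → (Fin n → ℝ))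
    (hh : ∀ w ∈ unitBox n, h w ∈ unitBox n ∧
      ∀ i, h w i = w i / (1 + ∑ j, A i j * h w j)) :
    ContDiffOn ℝ (⊤ : ℕ∞) h (unitBox n) ∧
    (∀ w ∈ unitBox n, ∀ i,
      0 < fderivWithin ℝ h (unitBox n) w (Pi.single i 1) i) ∧
    (∀ w ∈ unitBox n, ∀ w' ∈ unitBox n, ∀ i,
      (∀ j, j ≠ i → w' j = w j) → w i < w' i → h w i < h w' i) := by
  classical
  have hA0 : ∀ k j, 0 ≤ A k j := by
    intro k j; rcases hA k j with h' | h' <;> rw [h'] <;> norm_num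
  have hfpeq : ∀ w ∈ unitBox n, ∀ k, h w k * (1 + ∑ j, A k j * h w j) = w k := by
    intro w hw k
    have hbox := (hh w hw).1
    have hS : 0 ≤ ∑ j, A k j * h w j :=
      Finset.sum_nonneg fun j _ => mul_nonneg (hA0 k j) (box_mem hbox j).1
    have hD : (1 + ∑ j, A k j * h w j) ≠ 0 := by positivity
    rw [(hh w hw).2 k, div_mul_cancel₀ _ hD]
  have hUD : UniqueDiffOn ℝ (unitBox n) := by
    refine uniqueDiffOn_convex (convex_pi fun i _ => convex_Icc 0 1) ?_
    refine ⟨fun _ => 1/2, ?_⟩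
    rw [unitBox, interior_pi_set Set.finite_univ]
    intro k _
    simp only [Function.comp, interior_Icc, Set.mem_Ioo]
    norm_num
  have main : ∀ w₀ ∈ unitBox n, ContDiffWithinAt ℝ ω h (unitBox n) w₀ ∧
      ∀ i, 0 < fderivWithin ℝ h (unitBox n) w₀ (Pi.single i 1) i := by
    intro w₀ hw₀
    set x₀ := h w₀ with hx₀def
    have hx₀box : x₀ ∈ unitBox n := (hh w₀ hw₀).1
    have hKx : Kmap A x₀ = w₀ := funext fun k => hfpeq w₀ hw₀ k
    -- the derivative is invertible
    have hker : ∀ v, Mclm A x₀ v = 0 → v = 0 := by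
      intro v hv
      refine M_inj A hA0 hx₀box fun k => ?_
      have := congrFun hv k
      rwa [Mclm_apply] at this
    have hinj : Function.Injective (Mclm A x₀) := by
      intro u v huv
      have : u - v = 0 := hker (u - v) (by rw [map_sub, huv, sub_self])
      exact sub_eq_zero.mp this
    have hsurj : Function.Surjective (Mclm A x₀) :=
      LinearMap.injective_iff_surjective.mp hinj
    let e : (Fin n → ℝ) ≃L[ℝ] (Fin n → ℝ) :=
      LinearEquiv.toContinuousLinearEquiv
        (LinearEquiv.ofBijective ((Mclm A x₀) : (Fin n → ℝ) →ₗ[ℝ] (Fin n → ℝ))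
          ⟨hinj, hsurj⟩)
    have hecoe : (e : (Fin n → ℝ) →L[ℝ] (Fin n → ℝ)) = Mclm A x₀ := by
      ext v : 1; rfl
    have hKdiff : HasFDerivAt (Kmap A) (e : (Fin n → ℝ) →L[ℝ] (Fin n → ℝ)) x₀ := by
      rw [hecoe]; exact Kmap_hasFDerivAt A x₀
    have hstrict : HasStrictFDerivAt (Kmap A) (e : (Fin n → ℝ) →L[ℝ] (Fin n → ℝ)) x₀ :=
      (Kmap_contDiff A).contDiffAt.hasStrictFDerivAt' hKdiff (by simp)
    set g := hstrict.localInverse (Kmap A) e x₀ with hgdef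
    have hgK : ∀ᶠ y in 𝓝 w₀, Kmap A (g y) = y := by
      have := hstrict.eventually_right_inverse
      rwa [hKx] at this
    have hgc : ContinuousAt g w₀ := by
      have := hstrict.localInverse_continuousAt
      rwa [hKx] at this
    have hgx : g w₀ = x₀ := by
      have := hstrict.localInverse_apply_image
      rwa [hKx] at this
    have hgsmooth : ContDiffAt ℝ ω g w₀ := by
      have := (Kmap_contDiff A).contDiffAt.to_localInverse hKdiff (by simp)
      rwa [hKx] at this
    have hgd : HasStrictFDerivAt g ((e.symm : (Fin n → ℝ) →L[ℝ] (Fin n → ℝ))) w₀ := by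
      have := hstrict.to_localInverse
      rwa [hKx] at this
    -- eventual positivity of denominators
    have hO : ∀ᶠ y in 𝓝 w₀, ∀ k, 0 < 1 + ∑ j, A k j * g y j := by
      rw [Filter.eventually_all]
      intro k
      have hcont : ContinuousAt (fun y => 1 + ∑ j, A k j * g y j) w₀ := by
        have houter : Continuous fun x : Fin n → ℝ => 1 + ∑ j, A k j * x j :=
          continuous_const.add
            (continuous_finset_sum _ fun j _ => continuous_const.mul (continuous_apply j))
        exact (houter.continuousAt).comp hgc
      have hval : (0:ℝ) < 1 + ∑ j, A k j * g w₀ j := by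
        rw [hgx]
        have hS : 0 ≤ ∑ j, A k j * x₀ j :=
          Finset.sum_nonneg fun j _ => mul_nonneg (hA0 k j) (box_mem hx₀box j).1
        linarith
      exact hcont.eventually (eventually_gt_nhds hval)
    -- h agrees with g near w₀ within the box
    have heq : h =ᶠ[nhdsWithin w₀ (unitBox n)] g := by
      filter_upwards [(hgK.and hO).filter_mono nhdsWithin_le_nhds,
        self_mem_nhdsWithin] with w hw hwbox
      obtain ⟨hKg, hpos⟩ := hw
      have hz1 : ∀ k, g w k * (1 + ∑ j, A k j * g w j) = w k := fun k => congrFun hKg k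
      have hz0 : ∀ k, 0 ≤ g w k := by
        intro k
        by_contra hneg
        push_neg at hneg
        nlinarith [hz1 k, hpos k, (box_mem hwbox k).1]
      have hzS : ∀ k, 0 ≤ ∑ j, A k j * g w j := fun k =>
        Finset.sum_nonneg fun j _ => mul_nonneg (hA0 k j) (hz0 j)
      have hz2 : ∀ k, g w k ≤ 1 := by
        intro k
        nlinarith [hz1 k, hzS k, hz0 k, (box_mem hwbox k).2]
      have hzbox : g w ∈ unitBox n := fun k _ => ⟨hz0 k, hz2 k⟩
      exact fp_unique A hA0 (hh w hwbox).1 hzbox (hfpeq w hwbox) hz1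
    have hval : h w₀ = g w₀ := by rw [hgx]
    constructor
    · exact (hgsmooth.contDiffWithinAt).congr_of_eventuallyEq heq hval
    · intro i
      have hder : HasFDerivWithinAt h
          ((e.symm : (Fin n → ℝ) →L[ℝ] (Fin n → ℝ))) (unitBox n) w₀ :=
        (hgd.hasFDerivAt.hasFDerivWithinAt).congr_of_eventuallyEq heq hval
      have hfd : fderivWithin ℝ h (unitBox n) w₀
          = (e.symm : (Fin n → ℝ) →L[ℝ] (Fin n → ℝ)) :=
        hder.fderivWithin (hUD w₀ hw₀)
      rw [hfd]
      set v : Fin n → ℝ := e.symm (Pi.single i 1) with hvdef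
      have hMv : Mclm A x₀ v = Pi.single i 1 := by
        rw [← hecoe]
        exact e.apply_symm_apply _
      refine M_pos A hA0 hx₀box i fun k => ?_
      have := congrFun hMv k
      rw [Mclm_apply, Pi.single_apply] at this
      exact this
  refine ⟨fun w hw => (main w hw).1.of_le le_top, fun w hw i => (main w hw).2 i,
    fun w hw w' hw' i hji hlt => ?_⟩
  exact fp_mono A hA0 (hh w hw).1 (hh w' hw').1 (hfpeq w hw) (hfpeq w' hw') i hji hlt
end
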